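/- Let p be a prime, n a positive integer, t ≥ 1, and F : 𝔽_p^n → 𝔽_p^n a plateaued function that is (p^t + 1)-to-1. Then the differential uniformity of F is at least p^t. Moreover, the differential uniformity of F equals p^t if and only if F is differentially two-valued with value p^t, i.e., for every a ≠ 0 and every b, the number of solutions x of F(x+a) − F(x) = b lies in {0, p^t}. -/

import Mathlib

open Finset

/-- The Walsh transform of `F : 𝔽_p^n → 𝔽_p^m` at `(b, a)`. -/
noncomputable def walsh (p n m : ℕ) [NeZero p] (F : (Fin n → ZMod p) → (Fin m → ZMod p))
    (b : Fin m → ZMod p) (a : Fin n → ZMod p) : ℂ :=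
  ∑ x : Fin n → ZMod p,
    Complex.exp (2 * Real.pi * Complex.I *
      ((((∑ i, b i * F x i) - ∑ i, a i * x i).val : ℤ) : ℂ) / p)

/-- The imbalance `Nb_F = p^{-m} ∑_{b ≠ 0} |W_F(b,0)|²`. -/
noncomputable def imbalance (p n m : ℕ) [NeZero p]
    (F : (Fin n → ZMod p) → (Fin m → ZMod p)) : ℝ :=
  ((p : ℝ) ^ m)⁻¹ *
    ∑ b ∈ univ.filter (fun b : Fin m → ZMod p => b ≠ 0),
      ‖walsh p n m F b 0‖ ^ 2

/-- The size of the preimage set `F⁻¹(β)`. -/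
def fiberCard (p n m : ℕ) [NeZero p] (F : (Fin n → ZMod p) → (Fin m → ZMod p))
    (β : Fin m → ZMod p) : ℕ :=
  (univ.filter fun x => F x = β).card

/-- The component `F_b` is `t`-plateaued: `|W_F(b,a)| ∈ {0, p^{(n+t)/2}}` for all `a`. -/
def IsTPlateaued (p n m : ℕ) [NeZero p] (F : (Fin n → ZMod p) → (Fin m → ZMod p))
    (b : Fin m → ZMod p) (t : ℕ) : Prop :=
  ∀ a : Fin n → ZMod p,
    ‖walsh p n m F b a‖ = 0 ∨
    ‖walsh p n m F b a‖ = Real.sqrt ((p : ℝ) ^ (n + t))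

/-- `F` is plateaued: every nonzero component is `t_b`-plateaued for some `t_b`. -/
def IsPlateaued (p n m : ℕ) [NeZero p] (F : (Fin n → ZMod p) → (Fin m → ZMod p)) : Prop :=
  ∀ b : Fin m → ZMod p, b ≠ 0 → ∃ t : ℕ, IsTPlateaued p n m F b t

/-- `F` is `d`-to-`1`: exactly one preimage set has size `1`, and every other nonempty
preimage set has size exactly `d`. -/
def IsDToOne (p n : ℕ) [NeZero p] (F : (Fin n → ZMod p) → (Fin n → ZMod p)) (d : ℕ) : Prop :=
  ∃ β : Fin n → ZMod p, fiberCard p n n F β = 1 ∧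
    ∀ α : Fin n → ZMod p, α ≠ β → fiberCard p n n F α = 0 ∨ fiberCard p n n F α = d

/-- The number of solutions `x` of `F(x+a) - F(x) = b`. -/
def diffCount (p n : ℕ) [NeZero p] (F : (Fin n → ZMod p) → (Fin n → ZMod p))
    (a b : Fin n → ZMod p) : ℕ :=
  (univ.filter fun x => F (x + a) - F x = b).card

/-- The differential uniformity `δ(F) = max_{a ≠ 0, b} #{x : F(x+a) - F(x) = b}`. -/
def diffUniformity (p n : ℕ) [NeZero p]
    (F : (Fin n → ZMod p) → (Fin n → ZMod p)) : ℕ :=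
  ((univ ×ˢ univ).filter fun ab : (Fin n → ZMod p) × (Fin n → ZMod p) => ab.1 ≠ 0).sup
    fun ab => diffCount p n F ab.1 ab.2

/-!
The squared Walsh spectrum `‖W_F(b,a)‖²` is the two-dimensional discrete Fourier transform of the
difference table `δ_F(a,b) = #{x | F(x+a) - F(x) = b}`, so Parseval turns `∑_{b,a} ‖W_F(b,a)‖⁴`
into `p^{2n} ∑_{a,b} δ_F(a,b)²`, while `∑_b ‖W_F(b,0)‖² = p^n ∑_β |F⁻¹(β)|²`. On a plateaued
component `‖W_F(b,0)‖² ‖W_F(b,a)‖² ≤ ‖W_F(b,a)‖⁴`, and with Parseval in `a` this gives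
`p^n ∑_β |F⁻¹(β)|² ≤ ∑_{a,b} δ_F(a,b)²`. For a `(k+1)`-to-1 map the left side is
`p^{2n} + k p^n (p^n - 1)`; if `δ_F(a,b) ≤ k` for all `a ≠ 0`, then `δ_F(a,b)² ≤ k δ_F(a,b)` bounds
the right side by the same number, so equality holds termwise and `δ_F(a,b) ∈ {0, k}`.
The lower bound is pigeonhole: `∑_{a ≠ 0} δ_F(a,0) = ∑_β |F⁻¹(β)|² - p^n = k (p^n - 1)`.
-/

open ZMod

section Fourier

variable {p n : ℕ} [NeZero p]

theorem sum_stdAddChar_dotProduct (c : Fin n → ZMod p) :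
    ∑ x : Fin n → ZMod p, stdAddChar (c ⬝ᵥ x) = if c = 0 then (p : ℂ) ^ n else 0 := by
  let χ : AddChar (Fin n → ZMod p) ℂ :=
    stdAddChar.compAddMonoidHom (AddMonoidHom.mk' (c ⬝ᵥ ·) (dotProduct_add c))
  have hχ : χ = 0 ↔ c = 0 := by
    refine ⟨fun h => funext fun i => ?_, fun h => by ext x; simp [χ, h]⟩
    have := DFunLike.congr_fun h (Pi.single i 1)
    simpa [χ, injective_stdAddChar.eq_iff' (AddChar.map_zero_eq_one _)] using this
  classical
  have := AddChar.sum_eq_ite χ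
  simpa [χ, hχ, ZMod.card] using this

noncomputable def discreteFourier (f : (Fin n → ZMod p) → ℂ) (a : Fin n → ZMod p) : ℂ :=
  ∑ x, stdAddChar (a ⬝ᵥ x) * f x

theorem sum_sq_norm_discreteFourier (f : (Fin n → ZMod p) → ℂ) :
    ∑ a, ‖discreteFourier f a‖ ^ 2 = (p : ℝ) ^ n * ∑ x, ‖f x‖ ^ 2 := by
  have key : ∀ x y : Fin n → ZMod p,
      ∑ a, stdAddChar (a ⬝ᵥ x) * (starRingEnd ℂ) (stdAddChar (a ⬝ᵥ y))
        = if x = y then (p : ℂ) ^ n else 0 := by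
    intro x y
    simp_rw [← AddChar.map_neg_eq_conj, ← AddChar.map_add_eq_mul, ← dotProduct_neg,
      ← dotProduct_add, dotProduct_comm _ (x + -y), ← sub_eq_add_neg,
      sum_stdAddChar_dotProduct, sub_eq_zero]
  apply Complex.ofReal_injective
  push_cast
  simp_rw [← Complex.mul_conj', discreteFourier, map_sum, map_mul, sum_mul_sum,
    mul_sum]
  rw [sum_comm]
  refine sum_congr rfl fun x _ => ?_
  rw [sum_comm]
  simp_rw [mul_mul_mul_comm _ (f x), ← sum_mul, key, ite_mul, zero_mul,
    sum_ite_eq, mem_univ, if_true]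

theorem sum_sq_norm_discreteFourier_neg (f : (Fin n → ZMod p) → ℂ) :
    ∑ a, ‖discreteFourier f (-a)‖ ^ 2 = (p : ℝ) ^ n * ∑ x, ‖f x‖ ^ 2 :=
  (Fintype.sum_equiv (Equiv.neg _) _ _ fun _ => rfl).trans (sum_sq_norm_discreteFourier f)

end Fourier

section Walsh

variable {p n m : ℕ} [NeZero p]

theorem walsh_eq_sum_stdAddChar (F : (Fin n → ZMod p) → (Fin m → ZMod p))
    (b : Fin m → ZMod p) (a : Fin n → ZMod p) :
    walsh p n m F b a = ∑ x, stdAddChar (b ⬝ᵥ F x - a ⬝ᵥ x) := by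
  refine sum_congr rfl fun x _ => ?_
  rw [stdAddChar_apply, toCircle_apply]
  push_cast
  rfl

theorem walsh_eq_discreteFourier (F : (Fin n → ZMod p) → (Fin m → ZMod p))
    (b : Fin m → ZMod p) (a : Fin n → ZMod p) :
    walsh p n m F b a = discreteFourier (fun x => stdAddChar (b ⬝ᵥ F x)) (-a) := by
  simp_rw [walsh_eq_sum_stdAddChar, discreteFourier, ← AddChar.map_add_eq_mul, neg_dotProduct,
    neg_add_eq_sub]

theorem walsh_zero_right (F : (Fin n → ZMod p) → (Fin m → ZMod p)) (b : Fin m → ZMod p) :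
    walsh p n m F b 0 = discreteFourier (fun β => (fiberCard p n m F β : ℂ)) b := by
  simp_rw [walsh_eq_sum_stdAddChar, zero_dotProduct, sub_zero, discreteFourier, fiberCard,
    ← sum_fiberwise' univ F (fun β => stdAddChar (b ⬝ᵥ β)), sum_const,
    nsmul_eq_mul, mul_comm]

theorem sum_sq_norm_walsh (F : (Fin n → ZMod p) → (Fin m → ZMod p)) (b : Fin m → ZMod p) :
    ∑ a, ‖walsh p n m F b a‖ ^ 2 = (p : ℝ) ^ (2 * n) := by
  simp_rw [walsh_eq_discreteFourier, sum_sq_norm_discreteFourier_neg]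
  simp [AddChar.norm_apply, ZMod.card, two_mul, pow_add]

theorem sum_sq_norm_walsh_zero_right (F : (Fin n → ZMod p) → (Fin m → ZMod p)) :
    ∑ b, ‖walsh p n m F b 0‖ ^ 2 = (p : ℝ) ^ m * ∑ β, (fiberCard p n m F β : ℝ) ^ 2 := by
  simp_rw [walsh_zero_right, sum_sq_norm_discreteFourier, Complex.norm_natCast]

theorem discreteFourier_diffCount (F : (Fin n → ZMod p) → (Fin n → ZMod p))
    (d b : Fin n → ZMod p) :
    discreteFourier (fun e => (diffCount p n F d e : ℂ)) b
      = ∑ x, stdAddChar (b ⬝ᵥ (F (x + d) - F x)) := by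
  simp_rw [discreteFourier, diffCount,
    ← sum_fiberwise' univ (fun x => F (x + d) - F x) (fun e => stdAddChar (b ⬝ᵥ e)),
    sum_const, nsmul_eq_mul, mul_comm]

theorem sq_norm_walsh_eq_discreteFourier (F : (Fin n → ZMod p) → (Fin n → ZMod p))
    (b a : Fin n → ZMod p) :
    ((‖walsh p n n F b a‖ ^ 2 : ℝ) : ℂ)
      = discreteFourier
          (fun d => discreteFourier (fun e => (diffCount p n F d e : ℂ)) b) (-a) := by
  simp_rw [discreteFourier_diffCount, discreteFourier, mul_sum]
  push_cast
  rw [← Complex.mul_conj', walsh_eq_sum_stdAddChar, map_sum, sum_mul_sum, sum_comm]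
  conv_rhs => rw [sum_comm]
  refine sum_congr rfl fun y _ =>
    (Fintype.sum_equiv (Equiv.addLeft y) _ _ fun d => ?_).symm
  rw [← AddChar.map_neg_eq_conj, ← AddChar.map_add_eq_mul, ← AddChar.map_add_eq_mul]
  congr 1
  simp only [Equiv.coe_addLeft, dotProduct_add, dotProduct_sub, neg_dotProduct]
  ring

theorem sum_sum_sq_sq_norm_walsh (F : (Fin n → ZMod p) → (Fin n → ZMod p)) :
    ∑ b, ∑ a, (‖walsh p n n F b a‖ ^ 2) ^ 2
      = (p : ℝ) ^ (2 * n) * ∑ d, ∑ e, (diffCount p n F d e : ℝ) ^ 2 := by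
  have hnorm : ∀ b a, (‖walsh p n n F b a‖ ^ 2) ^ 2
      = ‖discreteFourier
          (fun d => discreteFourier (fun e => (diffCount p n F d e : ℂ)) b) (-a)‖ ^ 2 := by
    intro b a
    rw [← sq_norm_walsh_eq_discreteFourier, Complex.norm_of_nonneg (by positivity)]
  simp_rw [hnorm, sum_sq_norm_discreteFourier_neg, ← mul_sum]
  rw [sum_comm]
  simp_rw [sum_sq_norm_discreteFourier, ← mul_sum, Complex.norm_natCast, ← mul_assoc,
    ← pow_add, two_mul]

theorem isTPlateaued_zero (F : (Fin n → ZMod p) → (Fin m → ZMod p)) :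
    IsTPlateaued p n m F 0 n := by
  intro a
  have hW : walsh p n m F 0 a = if a = 0 then (p : ℂ) ^ n else 0 := by
    simp_rw [walsh_eq_sum_stdAddChar, zero_dotProduct, zero_sub, ← neg_dotProduct,
      sum_stdAddChar_dotProduct, neg_eq_zero]
  rw [hW, ← two_mul, pow_mul', Real.sqrt_sq (by positivity)]
  split_ifs <;> simp

theorem IsTPlateaued.sq_norm_walsh_zero_right_mul_le {F : (Fin n → ZMod p) → (Fin m → ZMod p)}
    {b : Fin m → ZMod p} {t : ℕ} (hb : IsTPlateaued p n m F b t) :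
    ‖walsh p n m F b 0‖ ^ 2 * (p : ℝ) ^ (2 * n) ≤ ∑ a, (‖walsh p n m F b a‖ ^ 2) ^ 2 := by
  rw [← sum_sq_norm_walsh F b, mul_sum]
  refine sum_le_sum fun a _ => ?_
  rcases hb a with ha | ha
  · simp [ha]
  rcases hb 0 with h0 | h0
  · simp [h0]
  · rw [ha, h0, sq (_ ^ 2)]

theorem IsPlateaued.pow_mul_sum_sq_fiberCard_le {F : (Fin n → ZMod p) → (Fin n → ZMod p)}
    (hF : IsPlateaued p n n F) :
    p ^ n * ∑ β, fiberCard p n n F β ^ 2 ≤ ∑ d, ∑ e, diffCount p n F d e ^ 2 := by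
  have hp : (0 : ℝ) < (p : ℝ) ^ (2 * n) := pow_pos (Nat.cast_pos.2 (NeZero.pos p)) _
  have hb : ∀ b, ∃ t, IsTPlateaued p n n F b t := fun b => by
    by_cases h : b = 0
    · exact h ▸ ⟨n, isTPlateaued_zero F⟩
    · exact hF b h
  suffices (p : ℝ) ^ (2 * n) * ((p : ℝ) ^ n * ∑ β, (fiberCard p n n F β : ℝ) ^ 2)
      ≤ (p : ℝ) ^ (2 * n) * ∑ d, ∑ e, (diffCount p n F d e : ℝ) ^ 2 by
    exact_mod_cast le_of_mul_le_mul_left this hp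
  calc (p : ℝ) ^ (2 * n) * ((p : ℝ) ^ n * ∑ β, (fiberCard p n n F β : ℝ) ^ 2)
      = ∑ b, ‖walsh p n n F b 0‖ ^ 2 * (p : ℝ) ^ (2 * n) := by
        rw [← sum_mul, sum_sq_norm_walsh_zero_right, mul_comm]
    _ ≤ ∑ b, ∑ a, (‖walsh p n n F b a‖ ^ 2) ^ 2 :=
        sum_le_sum fun b _ => (hb b).elim fun _ ht => ht.sq_norm_walsh_zero_right_mul_le
    _ = (p : ℝ) ^ (2 * n) * ∑ d, ∑ e, (diffCount p n F d e : ℝ) ^ 2 :=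
        sum_sum_sq_sq_norm_walsh F

end Walsh

section Counting

variable {p n m : ℕ} [NeZero p]

theorem sum_fiberCard (F : (Fin n → ZMod p) → (Fin m → ZMod p)) :
    ∑ β, fiberCard p n m F β = p ^ n := by
  simp [fiberCard, sum_card_fiberwise_eq_card_filter, ZMod.card]

theorem IsDToOne.sum_sq_fiberCard_add {F : (Fin n → ZMod p) → (Fin n → ZMod p)} {k : ℕ}
    (hF : IsDToOne p n F (k + 1)) :
    ∑ β, fiberCard p n n F β ^ 2 + k = (k + 1) * p ^ n := by
  obtain ⟨β₀, hβ₀, hrest⟩ := hF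
  have hsq : ∀ β, fiberCard p n n F β ^ 2 + k * (if β = β₀ then 1 else 0)
      = (k + 1) * fiberCard p n n F β := by
    intro β
    by_cases hβ : β = β₀
    · simp [hβ, hβ₀, add_comm]
    · rcases hrest β hβ with h | h <;> simp [hβ, h, sq]
  rw [← sum_fiberCard F, mul_sum, ← sum_congr rfl fun β _ => hsq β,
    sum_add_distrib, ← mul_sum, sum_ite_eq', if_pos (mem_univ _), mul_one]

theorem sum_diffCount_right (F : (Fin n → ZMod p) → (Fin n → ZMod p)) (a : Fin n → ZMod p) :
    ∑ b, diffCount p n F a b = p ^ n := by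
  simp [diffCount, sum_card_fiberwise_eq_card_filter, ZMod.card]

theorem diffCount_zero_left (F : (Fin n → ZMod p) → (Fin n → ZMod p)) (b : Fin n → ZMod p) :
    diffCount p n F 0 b = if b = 0 then p ^ n else 0 := by
  by_cases hb : b = 0 <;> simp [diffCount, hb, eq_comm (a := (0 : Fin n → ZMod p)), ZMod.card]

theorem sum_diffCount_zero_right (F : (Fin n → ZMod p) → (Fin n → ZMod p)) :
    ∑ a, diffCount p n F a 0 = ∑ β, fiberCard p n n F β ^ 2 := by
  have hfiber : ∀ x, #{a | F (x + a) - F x = 0} = fiberCard p n n F (F x) := fun x =>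
    card_equiv (Equiv.addLeft x) (by simp [sub_eq_zero])
  simp_rw [diffCount, card_filter]
  rw [sum_comm]
  simp_rw [← card_filter, hfiber, sq,
    ← sum_fiberwise' univ F (fun β => fiberCard p n n F β), sum_const,
    smul_eq_mul]
  rfl

end Counting

section DifferentialUniformity

variable {p n : ℕ} [NeZero p]

theorem diffUniformity_le_iff {F : (Fin n → ZMod p) → (Fin n → ZMod p)} {k : ℕ} :
    diffUniformity p n F ≤ k ↔ ∀ a, a ≠ 0 → ∀ b, diffCount p n F a b ≤ k := by
  simp only [diffUniformity, Finset.sup_le_iff, mem_filter, mem_product, mem_univ, true_and,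
    Prod.forall]
  exact ⟨fun h a ha b => h a b ha, fun h a b ha => h a ha b⟩

theorem exists_le_diffCount_zero_right (hp : 1 < p) (hn : 0 < n)
    {F : (Fin n → ZMod p) → (Fin n → ZMod p)} {k : ℕ} (hF : IsDToOne p n F (k + 1)) :
    ∃ a, a ≠ 0 ∧ k ≤ diffCount p n F a 0 := by
  have hcard : #((univ : Finset (Fin n → ZMod p)).erase 0) = p ^ n - 1 := by
    simp [card_erase_of_mem, ZMod.card]
  have hpn : 1 < p ^ n := Nat.one_lt_pow hn.ne' hp
  have hsum : ∑ a ∈ univ.erase 0, diffCount p n F a 0 + p ^ n + k = k * p ^ n + p ^ n := by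
    have h0 : diffCount p n F 0 0 = p ^ n := by simp [diffCount_zero_left]
    rw [← add_one_mul, ← hF.sum_sq_fiberCard_add, ← sum_diffCount_zero_right,
      ← sum_erase_add _ _ (mem_univ 0), h0]
  obtain ⟨a, ha, hk⟩ := exists_le_of_sum_le (s := univ.erase 0) (f := fun _ => k)
    (g := fun a => diffCount p n F a 0) (card_pos.1 (by omega)) (by
      rw [sum_const, hcard, smul_eq_mul, Nat.sub_one_mul, mul_comm]
      omega)
  exact ⟨a, ne_of_mem_erase ha, hk⟩

theorem IsPlateaued.sub_one_mul_le_sum_sq_diffCount {F : (Fin n → ZMod p) → (Fin n → ZMod p)}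
    (hplat : IsPlateaued p n n F) {k : ℕ} (hF : IsDToOne p n F (k + 1)) :
    (p ^ n - 1) * (k * p ^ n) ≤ ∑ a ∈ univ.erase 0, ∑ b, diffCount p n F a b ^ 2 := by
  have hrow0 : ∑ b, diffCount p n F 0 b ^ 2 = p ^ n * p ^ n := by
    simp [diffCount_zero_left, ite_pow, sq]
  have henergy := hplat.pow_mul_sum_sq_fiberCard_le
  rw [← add_sum_erase univ (fun a => ∑ b, diffCount p n F a b ^ 2) (mem_univ 0),
    hrow0] at henergy
  have hfib := congrArg (p ^ n * ·) hF.sum_sq_fiberCard_add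
  have hpn : 1 ≤ p ^ n := Nat.one_le_pow _ _ (NeZero.pos p)
  zify [hpn] at henergy hfib ⊢
  linarith

theorem diffCount_eq_zero_or_eq_of_le {F : (Fin n → ZMod p) → (Fin n → ZMod p)} {k : ℕ}
    (hplat : IsPlateaued p n n F) (hF : IsDToOne p n F (k + 1))
    (hle : ∀ a, a ≠ 0 → ∀ b, diffCount p n F a b ≤ k) :
    ∀ a, a ≠ 0 → ∀ b, diffCount p n F a b = 0 ∨ diffCount p n F a b = k := by
  have hbound := hplat.sub_one_mul_le_sum_sq_diffCount hF
  set s := (univ : Finset (Fin n → ZMod p)).erase 0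
  have hlin : ∑ a ∈ s, ∑ b, k * diffCount p n F a b = (p ^ n - 1) * (k * p ^ n) := by
    simp_rw [← mul_sum, sum_diffCount_right, sum_const, s, card_erase_of_mem (mem_univ _),
      card_univ, Fintype.card_fun, ZMod.card, Fintype.card_fin, smul_eq_mul]
    ring
  -- `δ (k - δ) + δ² = k δ` termwise, and the `δ²` part already exhausts the total
  have hsplit : ∑ a ∈ s, ∑ b, diffCount p n F a b * (k - diffCount p n F a b)
      + ∑ a ∈ s, ∑ b, diffCount p n F a b ^ 2 = (p ^ n - 1) * (k * p ^ n) := by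
    rw [← hlin, ← sum_add_distrib]
    refine sum_congr rfl fun a ha => ?_
    rw [← sum_add_distrib]
    refine sum_congr rfl fun b _ => ?_
    rw [sq, ← mul_add, Nat.sub_add_cancel (hle a (ne_of_mem_erase ha) b), mul_comm]
  have hdefect : ∑ a ∈ s, ∑ b, diffCount p n F a b * (k - diffCount p n F a b) = 0 := by
    omega
  intro a ha b
  have hab := sum_eq_zero_iff.1
    (sum_eq_zero_iff.1 hdefect a (mem_erase.2 ⟨ha, mem_univ a⟩)) b (mem_univ b)
  have := hle a ha b
  rcases Nat.mul_eq_zero.1 hab with h | h <;> omega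

end DifferentialUniformity

theorem plateaued_dToOne_diffUniformity_general (p n t : ℕ) [NeZero p] (hp : p.Prime) (hn : 0 < n)
    (F : (Fin n → ZMod p) → (Fin n → ZMod p))
    (hplat : IsPlateaued p n n F)
    (hdto1 : IsDToOne p n F (p ^ t + 1)) :
    p ^ t ≤ diffUniformity p n F ∧
    (diffUniformity p n F = p ^ t ↔
      ∀ a : Fin n → ZMod p, a ≠ 0 → ∀ b : Fin n → ZMod p,
        diffCount p n F a b = 0 ∨ diffCount p n F a b = p ^ t) := by
  have hlower : p ^ t ≤ diffUniformity p n F := by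
    obtain ⟨a, ha, hle⟩ := exists_le_diffCount_zero_right hp.one_lt hn hdto1
    exact hle.trans (diffUniformity_le_iff.1 le_rfl a ha 0)
  refine ⟨hlower, fun h => ?_, fun h => le_antisymm ?_ hlower⟩
  · exact diffCount_eq_zero_or_eq_of_le hplat hdto1 (diffUniformity_le_iff.1 h.le)
  · refine diffUniformity_le_iff.2 fun a ha b => ?_
    rcases h a ha b with hδ | hδ <;> omega

theorem plateaued_dToOne_diffUniformity (p n t : ℕ) [NeZero p] (hp : p.Prime) (hn : 0 < n)
    (ht : 1 ≤ t)
    (F : (Fin n → ZMod p) → (Fin n → ZMod p))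
    (hplat : IsPlateaued p n n F)
    (hdto1 : IsDToOne p n F (p ^ t + 1)) :
    p ^ t ≤ diffUniformity p n F ∧
    (diffUniformity p n F = p ^ t ↔
      ∀ a : Fin n → ZMod p, a ≠ 0 → ∀ b : Fin n → ZMod p,
        diffCount p n F a b = 0 ∨ diffCount p n F a b = p ^ t) :=
  plateaued_dToOne_diffUniformity_general p n t hp hn F hplat hdto1
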